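/- Let 0 ≤ ε < 1/8, let v ∈ ℝ^n be a unit vector, and let Q* ⊆ {1, …, n} be nonempty with |Q*| ≤ n/2. If ‖1̄_{Q*}/‖1̄_{Q*}‖ − v‖² ≤ ε, then the threshold set Q = {i ∈ {1,…,n} : v_i ≥ 1/(2·√(2|Q*|))} satisfies |Q △ Q*| ≤ 8ε·|Q|/(1 − 8ε). -/

import Mathlib

/-- Centered indicator vector `1̄_Q = 1_Q − (|Q|/n)·1` of `Q ⊆ {1,…,n}`. -/
noncomputable def centInd {n : ℕ} (Q : Finset (Fin n)) : EuclideanSpace ℝ (Fin n) :=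
  WithLp.toLp 2 (fun x => (if x ∈ Q then (1 : ℝ) else 0) - (Q.card : ℝ) / (n : ℝ))

/-!
The normalized centered indicator `u` of `Q*` is at least `1/√(2|Q*|)` on `Q*` (this uses
`|Q*| ≤ n/2`) and nonpositive off `Q*`. Thresholding `v` at half that height, `t = 1/(2√(2|Q*|))`,
therefore misclassifies a coordinate only where `|u_i − v_i| ≥ t`, so
`|Q △ Q*| · t² ≤ ‖u − v‖² ≤ ε`, i.e. `|Q △ Q*| ≤ 8ε|Q*|`. Since `|Q*| ≤ |Q| + |Q △ Q*|`,
solving for `|Q △ Q*|` gives the bound.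
-/

open Finset

lemma Finset.card_le_card_add_card_symmDiff {α : Type*} [DecidableEq α] (s t : Finset α) :
    #t ≤ #s + #(symmDiff s t) := by
  calc #t ≤ #(symmDiff s t ∪ s) := card_le_card (le_symmDiff_sup_left s t)
    _ ≤ #(symmDiff s t) + #s := card_union_le _ _
    _ = #s + #(symmDiff s t) := add_comm _ _

section Threshold

variable {ι : Type*} [Fintype ι] [DecidableEq ι]

lemma sq_le_sq_sub_of_mem_symmDiff_threshold {u v : ι → ℝ} {S : Finset ι} {t : ℝ}
    (ht : 0 ≤ t) (hS : ∀ i ∈ S, 2 * t ≤ u i) (hSc : ∀ i ∉ S, u i ≤ 0) {i : ι}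
    (hi : i ∈ symmDiff (univ.filter fun j => t ≤ v j) S) : t ^ 2 ≤ (u i - v i) ^ 2 := by
  rcases mem_symmDiff.mp hi with ⟨hiQ, hiS⟩ | ⟨hiS, hiQ⟩
  · have hv : t ≤ v i := (mem_filter.mp hiQ).2
    nlinarith [hSc i hiS]
  · have hv : v i < t := by simpa using hiQ
    nlinarith [hS i hiS]

lemma card_symmDiff_threshold_mul_sq_le_norm_sub_sq {u v : EuclideanSpace ℝ ι} {S : Finset ι}
    {t : ℝ} (ht : 0 ≤ t) (hS : ∀ i ∈ S, 2 * t ≤ u i) (hSc : ∀ i ∉ S, u i ≤ 0) :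
    #(symmDiff (univ.filter fun j => t ≤ v j) S) * t ^ 2 ≤ ‖u - v‖ ^ 2 := by
  rw [EuclideanSpace.real_norm_sq_eq]
  calc (#(symmDiff (univ.filter fun j => t ≤ v j) S) : ℝ) * t ^ 2
      = ∑ _i ∈ symmDiff (univ.filter fun j => t ≤ v j) S, t ^ 2 := by
        rw [sum_const, nsmul_eq_mul]
    _ ≤ ∑ i ∈ symmDiff (univ.filter fun j => t ≤ v j) S, (u i - v i) ^ 2 :=
        sum_le_sum fun i hi => sq_le_sq_sub_of_mem_symmDiff_threshold ht hS hSc hi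
    _ ≤ ∑ i, (u i - v i) ^ 2 :=
        sum_le_sum_of_subset_of_nonneg (subset_univ _) fun i _ _ => sq_nonneg _
    _ = ∑ i, (u - v) i ^ 2 := rfl

end Threshold

section CentInd

variable {n : ℕ} (Q : Finset (Fin n))

lemma centInd_apply (i : Fin n) :
    centInd Q i = (if i ∈ Q then (1 : ℝ) else 0) - #Q / n := rfl

lemma norm_centInd_sq : ‖centInd Q‖ ^ 2 = #Q * (1 - #Q / n) := by
  rcases n.eq_zero_or_pos with rfl | hn
  · simp [EuclideanSpace.real_norm_sq_eq, Subsingleton.elim Q ∅]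
  have hcoord (i : Fin n) : centInd Q i ^ 2
      = (if i ∈ Q then (1 : ℝ) - 2 * (#Q / n) else 0) + (#Q / n) ^ 2 := by
    rw [centInd_apply]
    split_ifs <;> ring
  rw [EuclideanSpace.real_norm_sq_eq, sum_congr rfl fun i _ => hcoord i, sum_add_distrib,
    sum_ite_mem, univ_inter, sum_const, sum_const, card_univ, Fintype.card_fin,
    nsmul_eq_mul, nsmul_eq_mul]
  field_simp
  ring

lemma normalize_centInd_apply_nonpos {i : Fin n} (hi : i ∉ Q) :
    (‖centInd Q‖⁻¹ • centInd Q) i ≤ 0 := by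
  rw [PiLp.smul_apply, centInd_apply, if_neg hi, smul_eq_mul]
  exact mul_nonpos_of_nonneg_of_nonpos (by positivity) (by rw [zero_sub, neg_nonpos]; positivity)

lemma inv_sqrt_le_normalize_centInd_apply (hQ : Q.Nonempty) (hhalf : 2 * #Q ≤ n) {i : Fin n}
    (hi : i ∈ Q) : 1 / √(2 * #Q) ≤ (‖centInd Q‖⁻¹ • centInd Q) i := by
  set a : ℝ := 1 - #Q / n
  have hk : (0 : ℝ) < #Q := by exact_mod_cast hQ.card_pos
  have ha : 1 / 2 ≤ a := by
    have hn : (0 : ℝ) < n := by exact_mod_cast hQ.card_pos.trans_le (by omega)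
    have : (2 * #Q : ℝ) ≤ n := by exact_mod_cast hhalf
    simp only [a]
    rw [le_sub_comm, div_le_iff₀ hn]
    linarith
  have hN : 0 < ‖centInd Q‖ := by
    have : 0 < ‖centInd Q‖ ^ 2 := by rw [norm_centInd_sq]; positivity
    nlinarith [norm_nonneg (centInd Q)]
  -- `‖centInd Q‖² = |Q| a ≤ 2|Q| a²` because `a ≥ 1/2`
  have hN_le : ‖centInd Q‖ ≤ √(2 * #Q) * a := by
    rw [← sq_le_sq₀ hN.le (by positivity), norm_centInd_sq, mul_pow,
      Real.sq_sqrt (by positivity)]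
    change (#Q : ℝ) * a ≤ 2 * #Q * a ^ 2
    nlinarith [mul_nonneg (mul_nonneg hk.le (by linarith : (0 : ℝ) ≤ a)) (by linarith : 0 ≤ 2 * a - 1)]
  rw [PiLp.smul_apply, centInd_apply, if_pos hi, smul_eq_mul, inv_mul_eq_div,
    div_le_div_iff₀ (by positivity) hN]
  linarith

end CentInd

theorem threshold_cut_close_to_optimal_general (n : ℕ) (ε : ℝ) (hε1 : ε < 1 / 8)
    (v : EuclideanSpace ℝ (Fin n))
    (Qstar : Finset (Fin n)) (hne : Qstar.Nonempty) (hhalf : 2 * Qstar.card ≤ n)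
    (hclose : ‖(‖centInd Qstar‖⁻¹ • centInd Qstar) - v‖ ^ 2 ≤ ε) :
    ((symmDiff
        (Finset.univ.filter (fun i : Fin n =>
          1 / (2 * Real.sqrt (2 * (Qstar.card : ℝ))) ≤ v i)) Qstar).card : ℝ)
      ≤ 8 * ε * ((Finset.univ.filter (fun i : Fin n =>
          1 / (2 * Real.sqrt (2 * (Qstar.card : ℝ))) ≤ v i)).card : ℝ) / (1 - 8 * ε) := by
  set k := #Qstar
  set t := 1 / (2 * √(2 * (k : ℝ)))
  set Q := univ.filter fun i => t ≤ v i
  have hk : (0 : ℝ) < k := by exact_mod_cast hne.card_pos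
  have ht_sq : t ^ 2 = 1 / (8 * k) := by
    rw [div_pow, mul_pow, Real.sq_sqrt (by positivity)]
    ring
  have h2t : 2 * t = 1 / √(2 * k) := by
    simp only [t]
    field_simp
  have hsep : ∀ i ∈ Qstar, 2 * t ≤ (‖centInd Qstar‖⁻¹ • centInd Qstar) i := fun i hi =>
    h2t ▸ inv_sqrt_le_normalize_centInd_apply Qstar hne hhalf hi
  have hmis : #(symmDiff Q Qstar) * t ^ 2 ≤ ε :=
    (card_symmDiff_threshold_mul_sq_le_norm_sub_sq (by positivity) hsep
      fun i hi => normalize_centInd_apply_nonpos Qstar hi).trans hclose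
  have hd : (#(symmDiff Q Qstar) : ℝ) ≤ 8 * ε * k := by
    rw [ht_sq, mul_one_div, div_le_iff₀ (by positivity)] at hmis
    linarith
  have hk_le : (k : ℝ) ≤ #Q + #(symmDiff Q Qstar) := by
    exact_mod_cast card_le_card_add_card_symmDiff Q Qstar
  have hε0 : 0 ≤ ε := (sq_nonneg _).trans hclose
  rw [le_div_iff₀ (by linarith)]
  nlinarith [mul_le_mul_of_nonneg_left hk_le hε0]

/-- **threshold rounding.** Let `0 ≤ ε < 1/8`, `v ∈ ℝⁿ` a unit vector and
`Q* ⊆ {1,…,n}` nonempty with `|Q*| ≤ n/2`. If `‖1̄_{Q*}/‖1̄_{Q*}‖ − v‖² ≤ ε`, then the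
threshold set `Q = {i : v_i ≥ 1/(2√(2|Q*|))}` satisfies `|Q △ Q*| ≤ 8ε·|Q|/(1 − 8ε)`. -/
theorem threshold_cut_close_to_optimal (n : ℕ) (ε : ℝ) (hε0 : 0 ≤ ε) (hε1 : ε < 1 / 8)
    (v : EuclideanSpace ℝ (Fin n)) (hv : ‖v‖ = 1)
    (Qstar : Finset (Fin n)) (hne : Qstar.Nonempty) (hhalf : 2 * Qstar.card ≤ n)
    (hclose : ‖(‖centInd Qstar‖⁻¹ • centInd Qstar) - v‖ ^ 2 ≤ ε) :
    ((symmDiff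
        (Finset.univ.filter (fun i : Fin n =>
          1 / (2 * Real.sqrt (2 * (Qstar.card : ℝ))) ≤ v i)) Qstar).card : ℝ)
      ≤ 8 * ε * ((Finset.univ.filter (fun i : Fin n =>
          1 / (2 * Real.sqrt (2 * (Qstar.card : ℝ))) ≤ v i)).card : ℝ) / (1 - 8 * ε) :=
  threshold_cut_close_to_optimal_general n ε hε1 v Qstar hne hhalf hclose
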